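/- If (u_1, v_1), (u_2, v_2) ∈ g_↓ and (u_1, v_1) ≼ (u_2, v_2), then r_↓(u_1, v_1) ≤ r_↓(u_2, v_2). -/

import Mathlib

open Set

noncomputable section

/-- The piecewise linear closed curve through the vertices `x 0, x 1, …`:
`f(i+α) = (1-α) • x i + α • x (i+1)`. -/
def fCurve {k : ℕ} (x : ℕ → EuclideanSpace ℝ (Fin k)) (t : ℝ) :
    EuclideanSpace ℝ (Fin k) :=
  (1 - Int.fract t) • x (⌊t⌋.toNat) + Int.fract t • x (⌊t⌋.toNat + 1)

/-- The extension of the curve from `[0,m]` to `[0,2m]` by `f(u) = f(u-m)` for `u > m`. -/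
def fCurveExt {k : ℕ} (m : ℕ) (x : ℕ → EuclideanSpace ℝ (Fin k)) (u : ℝ) :
    EuclideanSpace ℝ (Fin k) :=
  if u ≤ m then fCurve x u else fCurve x (u - m)

/-- The rectangle `D = [0,2m] × [0,n]`. -/
def Dfull (m n : ℕ) : Set (ℝ × ℝ) :=
  Icc (0:ℝ) (2*(m:ℝ)) ×ˢ Icc (0:ℝ) (n:ℝ)

/-- The free space `D_ε = {(u,v) ∈ D : dist (f_X u) (f_Y v) ≤ ε}`. -/
def Dfree {k : ℕ} (m n : ℕ) (x y : ℕ → EuclideanSpace ℝ (Fin k)) (ε : ℝ) :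
    Set (ℝ × ℝ) :=
  {p ∈ Dfull m n | dist (fCurveExt m x p.1) (fCurve y p.2) ≤ ε}

/-- The top side `T = [0,2m] × {n}` of `D`. -/
def Tside (m n : ℕ) : Set (ℝ × ℝ) := Icc (0:ℝ) (2*(m:ℝ)) ×ˢ {(n:ℝ)}

/-- The bottom side `B = [0,2m] × {0}` of `D`. -/
def Bside (m : ℕ) : Set (ℝ × ℝ) := Icc (0:ℝ) (2*(m:ℝ)) ×ˢ {(0:ℝ)}

/-- A monotone (non-decreasing) path: a connected subset `γ ⊆ Dε` with
`(u-u')·(v-v') ≥ 0` for all `(u,v), (u',v') ∈ γ`. -/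
def IsMonPath (Dε γ : Set (ℝ × ℝ)) : Prop :=
  γ ⊆ Dε ∧ IsConnected γ ∧
    ∀ p ∈ γ, ∀ q ∈ γ, (p.1 - q.1) * (p.2 - q.2) ≥ 0

/-- Two points are mutually reachable if some monotone path contains both. -/
def Reach (Dε : Set (ℝ × ℝ)) (p q : ℝ × ℝ) : Prop :=
  ∃ γ : Set (ℝ × ℝ), IsMonPath Dε γ ∧ p ∈ γ ∧ q ∈ γ

/-- `g↓`: the points of `Dε` mutually reachable with at least one point of `B`. -/
def gDown (m : ℕ) (Dε : Set (ℝ × ℝ)) : Set (ℝ × ℝ) :=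
  {p ∈ Dε | ∃ q ∈ Bside m, Reach Dε p q}

/-- `g↑`: the points of `Dε` mutually reachable with at least one point of `T`. -/
def gUp (m n : ℕ) (Dε : Set (ℝ × ℝ)) : Set (ℝ × ℝ) :=
  {p ∈ Dε | ∃ q ∈ Tside m n, Reach Dε p q}

/-- The pointer `r↑(p)`: the maximum `u* ∈ [0,2m]` such that `p` and `(u*, n)`
are mutually reachable. -/
def rUp (m n : ℕ) (Dε : Set (ℝ × ℝ)) (p : ℝ × ℝ) : ℝ :=
  sSup {u : ℝ | u ∈ Icc (0:ℝ) (2*(m:ℝ)) ∧ Reach Dε p (u, (n:ℝ))}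

/-- The pointer `r↓(p)`: for `p` with `p.2 > 0`, the maximum `u* ∈ [0,2m]` such
that `p` and `(u*, 0)` are mutually reachable; on the bottom side `r↓(u,0) = u`. -/
def rDown (m : ℕ) (Dε : Set (ℝ × ℝ)) (p : ℝ × ℝ) : ℝ :=
  if p.2 = 0 then p.1
  else sSup {u : ℝ | u ∈ Icc (0:ℝ) (2*(m:ℝ)) ∧ Reach Dε p (u, (0:ℝ))}

/-- The cell `D_ij = [i-1,i] × [j-1,j]`. -/
def cellD (i j : ℕ) : Set (ℝ × ℝ) :=
  Icc ((i:ℝ)-1) (i:ℝ) ×ˢ Icc ((j:ℝ)-1) (j:ℝ)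

/-- The top side `T_ij` of the cell `D_ij`. -/
def cellT (i j : ℕ) : Set (ℝ × ℝ) := Icc ((i:ℝ)-1) (i:ℝ) ×ˢ {(j:ℝ)}

/-- The bottom side `B_ij` of the cell `D_ij`. -/
def cellB (i j : ℕ) : Set (ℝ × ℝ) := Icc ((i:ℝ)-1) (i:ℝ) ×ˢ {((j:ℝ)-1)}

/-- The right side `R_ij` of the cell `D_ij`. -/
def cellR (i j : ℕ) : Set (ℝ × ℝ) := {(i:ℝ)} ×ˢ Icc ((j:ℝ)-1) (j:ℝ)

/-- The left side `L_ij` of the cell `D_ij`. -/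
def cellL (i j : ℕ) : Set (ℝ × ℝ) := {((i:ℝ)-1)} ×ˢ Icc ((j:ℝ)-1) (j:ℝ)

/-- The partial order `≼` on `D`: `(u1,v1) ≼ (u2,v2)` iff `u1 ≤ u2` and `v1 ≥ v2`. -/
def prec (p q : ℝ × ℝ) : Prop := p.1 ≤ q.1 ∧ q.2 ≤ p.2

/-!
A monotone path is exactly a connected chain for the product order on `ℝ × ℝ`, and such a chain
is parametrised by the level `u + v` through a 1-Lipschitz inverse. Reachability is therefore
transitive along `≤` (cut both paths at the common point and glue). If `p ≼ q` and
`p` reaches `(u, 0)` while `q` reaches some `(b, 0)` with `b ≤ u`, then the two paths have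
interleaved endpoints, so by the intermediate value theorem applied to the level parametrisations
they meet; gluing at the meeting point shows that `q` also reaches `(u, 0)`. Hence every
candidate for `r↓(p)` is dominated by one for `r↓(q)`.
-/

open Function

lemma Prod.mul_sub_nonneg_iff_le_or_le {R : Type*} [Ring R] [LinearOrder R]
    [IsStrictOrderedRing R] (p q : R × R) :
    0 ≤ (p.1 - q.1) * (p.2 - q.2) ↔ p ≤ q ∨ q ≤ p := by
  rw [mul_nonneg_iff, Prod.le_def, Prod.le_def, sub_nonneg, sub_nonneg, sub_nonpos, sub_nonpos,
    or_comm]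

lemma isMonPath_iff {E γ : Set (ℝ × ℝ)} :
    IsMonPath E γ ↔ γ ⊆ E ∧ IsConnected γ ∧ IsChain (· ≤ ·) γ := by
  simp only [IsMonPath, ge_iff_le, Prod.mul_sub_nonneg_iff_le_or_le, IsChain, Set.Pairwise]
  exact and_congr_right fun _ => and_congr_right fun _ =>
    ⟨fun h p hp q hq _ => h p hp q hq, fun h p hp q hq =>
      (eq_or_ne p q).elim (fun hpq => .inl hpq.le) (h hp hq)⟩

/-- Points of a chain in `ℝ × ℝ` are ordered, and separated, by their level `u + v`. -/
def level (w : ℝ × ℝ) : ℝ := w.1 + w.2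

lemma continuous_level : Continuous level := continuous_fst.add continuous_snd

/-- The point of `γ` at a given level (a junk value off `level '' γ`). -/
def levelParam (γ : Set (ℝ × ℝ)) : ℝ → ℝ × ℝ := invFunOn level γ

lemma levelParam_mem {γ : Set (ℝ × ℝ)} {s : ℝ} (hs : s ∈ level '' γ) : levelParam γ s ∈ γ :=
  invFunOn_mem hs

lemma level_levelParam {γ : Set (ℝ × ℝ)} {s : ℝ} (hs : s ∈ level '' γ) :
    level (levelParam γ s) = s :=
  invFunOn_eq hs

lemma IsPreconnected.Icc_level_subset_image {γ : Set (ℝ × ℝ)} (hγ : IsPreconnected γ)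
    {w w' : ℝ × ℝ} (hw : w ∈ γ) (hw' : w' ∈ γ) : Icc (level w) (level w') ⊆ level '' γ :=
  (hγ.image _ continuous_level.continuousOn).ordConnected.out ⟨w, hw, rfl⟩ ⟨w', hw', rfl⟩

namespace IsChain

variable {γ : Set (ℝ × ℝ)}

lemma le_iff_level_le (hγ : IsChain (· ≤ ·) γ) {w w' : ℝ × ℝ} (hw : w ∈ γ) (hw' : w' ∈ γ) :
    w ≤ w' ↔ level w ≤ level w' := by
  refine ⟨fun h => add_le_add h.1 h.2, fun h => ?_⟩
  rcases hγ.total hw hw' with hle | ⟨h1, h2⟩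
  · exact hle
  · simp only [level] at h
    exact ⟨by linarith, by linarith⟩

lemma injOn_level (hγ : IsChain (· ≤ ·) γ) : InjOn level γ := fun _ hw _ hw' h =>
  le_antisymm ((hγ.le_iff_level_le hw hw').2 h.le) ((hγ.le_iff_level_le hw' hw).2 h.ge)

lemma levelParam_level (hγ : IsChain (· ≤ ·) γ) {w : ℝ × ℝ} (hw : w ∈ γ) :
    levelParam γ (level w) = w :=
  hγ.injOn_level.leftInvOn_invFunOn hw

lemma dist_le_abs_level_sub (hγ : IsChain (· ≤ ·) γ) {w w' : ℝ × ℝ} (hw : w ∈ γ) (hw' : w' ∈ γ) :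
    dist w w' ≤ |level w - level w'| := by
  rw [Prod.dist_eq, Real.dist_eq, Real.dist_eq]
  simp only [level]
  rcases hγ.total hw hw' with ⟨h1, h2⟩ | ⟨h1, h2⟩
  · rw [abs_of_nonpos (by linarith), abs_of_nonpos (by linarith), abs_of_nonpos (by linarith)]
    exact max_le (by linarith) (by linarith)
  · rw [abs_of_nonneg (by linarith), abs_of_nonneg (by linarith), abs_of_nonneg (by linarith)]
    exact max_le (by linarith) (by linarith)

lemma lipschitzOnWith_levelParam (hγ : IsChain (· ≤ ·) γ) :
    LipschitzOnWith 1 (levelParam γ) (level '' γ) := by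
  refine LipschitzOnWith.of_dist_le_mul ?_
  rintro _ ⟨w, hw, rfl⟩ _ ⟨w', hw', rfl⟩
  rw [hγ.levelParam_level hw, hγ.levelParam_level hw', NNReal.coe_one, one_mul, Real.dist_eq]
  exact hγ.dist_le_abs_level_sub hw hw'

lemma isPreconnected_inter_preimage_level (hγ : IsChain (· ≤ ·) γ) (hγc : IsPreconnected γ)
    {I : Set ℝ} (hI : I.OrdConnected) : IsPreconnected (γ ∩ level ⁻¹' I) := by
  have hsub : γ ∩ level ⁻¹' I ⊆ γ := inter_subset_left
  have hinv : levelParam γ '' (level '' γ ∩ I) = γ ∩ level ⁻¹' I := by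
    rw [← image_inter_preimage]
    exact (hγ.injOn_level.leftInvOn_invFunOn.mono hsub).image_image
  rw [← hinv]
  exact ((hγc.image _ continuous_level.continuousOn).ordConnected.inter hI).isPreconnected.image _
    (hγ.lipschitzOnWith_levelParam.continuousOn.mono inter_subset_left)

lemma le_levelParam (hγ : IsChain (· ≤ ·) γ) {w : ℝ × ℝ} {s : ℝ} (hw : w ∈ γ)
    (hs : s ∈ level '' γ) (hws : level w ≤ s) : w ≤ levelParam γ s := by
  rwa [hγ.le_iff_level_le hw (levelParam_mem hs), level_levelParam hs]

lemma levelParam_le (hγ : IsChain (· ≤ ·) γ) {w : ℝ × ℝ} {s : ℝ} (hw : w ∈ γ)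
    (hs : s ∈ level '' γ) (hsw : s ≤ level w) : levelParam γ s ≤ w := by
  rwa [hγ.le_iff_level_le (levelParam_mem hs) hw, level_levelParam hs]

/-- `c` lies upper left of `a` and `q` lower right of `p`, so the two chains must cross. -/
lemma exists_mem_inter_of_prec {δ : Set (ℝ × ℝ)} (hγ : IsChain (· ≤ ·) γ)
    (hγc : IsPreconnected γ) (hδ : IsChain (· ≤ ·) δ) (hδc : IsPreconnected δ)
    {a p c q : ℝ × ℝ} (ha : a ∈ γ) (hp : p ∈ γ) (hc : c ∈ δ) (hq : q ∈ δ)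
    (hap : a ≤ p) (hcq : c ≤ q) (hca : prec c a) (hpq : prec p q) :
    ∃ z ∈ γ ∩ δ, a ≤ z ∧ z ≤ q := by
  obtain ⟨hca₁, hca₂⟩ := hca
  obtain ⟨hpq₁, hpq₂⟩ := hpq
  -- compare the two paths between the levels of the corners `(a.1, c.2)` and `(p.1, q.2)`
  set lo := a.1 + c.2
  set hi := p.1 + q.2
  have hlohi : lo ≤ hi := add_le_add hap.1 hcq.2
  have hγI : Icc lo hi ⊆ level '' γ := (Icc_subset_Icc (by simp only [level]; linarith)
    (by simp only [level]; linarith)).trans (hγc.Icc_level_subset_image ha hp)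
  have hδI : Icc lo hi ⊆ level '' δ := (Icc_subset_Icc (by simp only [level]; linarith)
    (by simp only [level]; linarith)).trans (hδc.Icc_level_subset_image hc hq)
  have hlo := left_mem_Icc.2 hlohi
  have hhi := right_mem_Icc.2 hlohi
  have hγlo := (hγ.le_levelParam ha (hγI hlo) (by simp only [level]; linarith)).1
  have hδlo := (hδ.le_levelParam hc (hδI hlo) (by simp only [level]; linarith)).2
  have hγhi := (hγ.levelParam_le hp (hγI hhi) (by simp only [level]; linarith)).1
  have hδhi := (hδ.levelParam_le hq (hδI hhi) (by simp only [level]; linarith)).2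
  have hδlo' := level_levelParam (hδI hlo)
  have hδhi' := level_levelParam (hδI hhi)
  simp only [level] at hδlo' hδhi'
  obtain ⟨s, hs, hs₁⟩ := isPreconnected_Icc.intermediate_value₂ hlo hhi
    (continuous_fst.comp_continuousOn (hδ.lipschitzOnWith_levelParam.continuousOn.mono hδI))
    (continuous_fst.comp_continuousOn (hγ.lipschitzOnWith_levelParam.continuousOn.mono hγI))
    (show (levelParam δ lo).1 ≤ (levelParam γ lo).1 by linarith)
    (show (levelParam γ hi).1 ≤ (levelParam δ hi).1 by linarith)
  have hγs := level_levelParam (hγI hs)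
  have hδs := level_levelParam (hδI hs)
  simp only [level] at hγs hδs
  simp only [comp_apply] at hs₁
  have hz : levelParam δ s = levelParam γ s := Prod.ext hs₁ (by linarith)
  refine ⟨levelParam γ s, ⟨levelParam_mem (hγI hs), hz ▸ levelParam_mem (hδI hs)⟩,
    hγ.le_levelParam ha (hγI hs) ?_, hz ▸ hδ.levelParam_le hq (hδI hs) ?_⟩
  · simp only [level]; linarith [hs.1]
  · simp only [level]; linarith [hs.2]

end IsChain

namespace Reach

variable {E : Set (ℝ × ℝ)}

lemma symm {p q : ℝ × ℝ} (h : Reach E p q) : Reach E q p :=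
  let ⟨γ, hγ, hp, hq⟩ := h
  ⟨γ, hγ, hq, hp⟩

lemma le_of_snd_lt {p q : ℝ × ℝ} (h : Reach E p q) (hqp : q.2 < p.2) : q ≤ p := by
  obtain ⟨γ, hγ, hp, hq⟩ := h
  exact ((isMonPath_iff.1 hγ).2.2.total hq hp).resolve_right fun h => hqp.not_ge h.2

lemma trans_of_le {a z c : ℝ × ℝ} (haz' : Reach E a z) (hzc' : Reach E z c) (haz : a ≤ z)
    (hzc : z ≤ c) : Reach E a c := by
  obtain ⟨γ, hγ, haγ, hzγ⟩ := haz'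
  obtain ⟨δ, hδ, hzδ, hcδ⟩ := hzc'
  rw [isMonPath_iff] at hγ hδ
  obtain ⟨hγE, hγc, hγ⟩ := hγ
  obtain ⟨hδE, hδc, hδ⟩ := hδ
  have hγz : γ ∩ Iic z = γ ∩ level ⁻¹' Iic (level z) :=
    ext fun w => and_congr_right fun hw => hγ.le_iff_level_le hw hzγ
  have hδz : δ ∩ Ici z = δ ∩ level ⁻¹' Ici (level z) :=
    ext fun w => and_congr_right fun hw => hδ.le_iff_level_le hzδ hw
  refine ⟨γ ∩ Iic z ∪ δ ∩ Ici z, isMonPath_iff.2 ⟨?_, ⟨⟨z, .inl ⟨hzγ, self_mem_Iic⟩⟩, ?_⟩, ?_⟩,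
    .inl ⟨haγ, haz⟩, .inr ⟨hcδ, hzc⟩⟩
  · exact union_subset (inter_subset_left.trans hγE) (inter_subset_left.trans hδE)
  · refine IsPreconnected.union z ⟨hzγ, self_mem_Iic⟩ ⟨hzδ, self_mem_Ici⟩ ?_ ?_
    · rw [hγz]; exact hγ.isPreconnected_inter_preimage_level hγc.isPreconnected ordConnected_Iic
    · rw [hδz]; exact hδ.isPreconnected_inter_preimage_level hδc.isPreconnected ordConnected_Ici
  · exact isChain_union.2 ⟨hγ.mono inter_subset_left, hδ.mono inter_subset_left,
      fun w hw w' hw' _ => .inl (hw.2.trans hw'.2)⟩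

lemma cross {a p c q : ℝ × ℝ} (hap' : Reach E a p) (hcq' : Reach E c q) (hap : a ≤ p)
    (hcq : c ≤ q) (hca : prec c a) (hpq : prec p q) : Reach E a q := by
  obtain ⟨γ, hγ, haγ, hpγ⟩ := hap'
  obtain ⟨δ, hδ, hcδ, hqδ⟩ := hcq'
  obtain ⟨z, ⟨hzγ, hzδ⟩, haz, hzq⟩ := (isMonPath_iff.1 hγ).2.2.exists_mem_inter_of_prec
    (isMonPath_iff.1 hγ).2.1.isPreconnected (isMonPath_iff.1 hδ).2.2
    (isMonPath_iff.1 hδ).2.1.isPreconnected haγ hpγ hcδ hqδ hap hcq hca hpq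
  exact trans_of_le ⟨γ, hγ, haγ, hzγ⟩ ⟨δ, hδ, hzδ, hqδ⟩ haz hzq

end Reach

variable {m : ℕ} {E : Set (ℝ × ℝ)} {p q : ℝ × ℝ}

lemma exists_reach_bottom_of_mem_gDown (hp : p ∈ gDown m E) :
    ∃ b ∈ Icc (0 : ℝ) (2 * m), Reach E p (b, 0) := by
  obtain ⟨-, ⟨b, b'⟩, ⟨hb, hb'⟩, h⟩ := hp
  obtain rfl : b' = 0 := hb'
  exact ⟨b, hb, h⟩

lemma rDown_le_fst (hp : p ∈ gDown m E) (hp2 : 0 ≤ p.2) : rDown m E p ≤ p.1 := by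
  rcases hp2.eq_or_lt with hp0 | hp0
  · rw [rDown, if_pos hp0.symm]
  rw [rDown, if_neg hp0.ne']
  obtain ⟨b, hb, hpb⟩ := exists_reach_bottom_of_mem_gDown hp
  exact csSup_le ⟨b, hb, hpb⟩ fun u hu => (hu.2.le_of_snd_lt hp0).1

lemma rDown_le_rDown_of_snd_pos (hp : p ∈ gDown m E) (hq : q ∈ gDown m E) (hpq : prec p q)
    (hq0 : 0 < q.2) : rDown m E p ≤ rDown m E q := by
  have hp0 : 0 < p.2 := hq0.trans_le hpq.2
  rw [rDown, if_neg hp0.ne', rDown, if_neg hq0.ne']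
  obtain ⟨a, ha, hpa⟩ := exists_reach_bottom_of_mem_gDown hp
  obtain ⟨b, hb, hqb⟩ := exists_reach_bottom_of_mem_gDown hq
  have hbdd : BddAbove {u | u ∈ Icc (0 : ℝ) (2 * m) ∧ Reach E q (u, 0)} :=
    ⟨2 * m, fun _ hu => hu.1.2⟩
  refine csSup_le ⟨a, ha, hpa⟩ fun u ⟨hu, hpu⟩ => ?_
  rcases le_total u b with hub | hbu
  · exact hub.trans (le_csSup hbdd ⟨hb, hqb⟩)
  · exact le_csSup hbdd ⟨hu, (Reach.cross hpu.symm hqb.symm (hpu.le_of_snd_lt hp0)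
      (hqb.le_of_snd_lt hq0) ⟨hbu, le_rfl⟩ hpq).symm⟩

theorem stmt6_general
    (k m n : ℕ)
    (x y : ℕ → EuclideanSpace ℝ (Fin k))
    (ε : ℝ)
    (Dε : Set (ℝ × ℝ)) (hDε : Dε = Dfree m n x y ε)
    (p q : ℝ × ℝ) (hp : p ∈ gDown m Dε) (hq : q ∈ gDown m Dε)
    (hpq : prec p q) :
    rDown m Dε p ≤ rDown m Dε q := by
  have hq2 : 0 ≤ q.2 := by
    subst hDε
    exact hq.1.1.2.1
  rcases hq2.eq_or_lt with hq0 | hq0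
  · calc rDown m Dε p ≤ p.1 := rDown_le_fst hp (hq2.trans hpq.2)
      _ ≤ q.1 := hpq.1
      _ = rDown m Dε q := by rw [rDown, if_pos hq0.symm]
  · exact rDown_le_rDown_of_snd_pos hp hq hpq hq0

theorem stmt6
    (k m n : ℕ) (hk : 1 ≤ k) (hm : 1 ≤ m) (hn : 1 ≤ n)
    (x y : ℕ → EuclideanSpace ℝ (Fin k)) (hx : x m = x 0) (hy : y n = y 0)
    (ε : ℝ) (hε : 0 ≤ ε)
    (Dε : Set (ℝ × ℝ)) (hDε : Dε = Dfree m n x y ε)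
    (p q : ℝ × ℝ) (hp : p ∈ gDown m Dε) (hq : q ∈ gDown m Dε)
    (hpq : prec p q) :
    rDown m Dε p ≤ rDown m Dε q :=
  stmt6_general k m n x y ε Dε hDε p q hp hq hpq
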